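/- arXiv:2101.07874 — 2 statements merged into one kernel-verified Lean document; each statement's English description precedes it below -/
import Mathlib

section
/- Let Ω ⊂ ℂ be an open set, q a positive integer, and f : Ω → ℂ a function of class C^q. If (∂/∂z̄)^q f = 0 on Ω \ f⁻¹({0}), then (∂/∂z̄)^q f = 0 on all of Ω. -/
open Complex MeasureTheory

/-- The Wirtinger derivative ∂/∂z̄ = (1/2)(∂/∂x + i ∂/∂y). -/
noncomputable def wirtingerBar (f : ℂ → ℂ) (z : ℂ) : ℂ :=
  (1 / 2 : ℂ) * (fderiv ℝ f z 1 + Complex.I * fderiv ℝ f z Complex.I)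

lemma wb_zero_fun : wirtingerBar (fun _ => (0:ℂ)) = fun _ => 0 := by
  funext z
  simp [wirtingerBar]

lemma wb_iter_zero (k : ℕ) : wirtingerBar^[k] (fun _ => (0:ℂ)) = fun _ => 0 := by
  induction k with
  | zero => rfl
  | succ k ih => rw [Function.iterate_succ_apply, wb_zero_fun, ih]

lemma wb_congr {f g : ℂ → ℂ} {z : ℂ} (h : f =ᶠ[nhds z] g) :
    wirtingerBar f =ᶠ[nhds z] wirtingerBar g := by
  filter_upwards [h.fderiv (𝕜 := ℝ)] with w hw
  simp [wirtingerBar, hw]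

lemma wb_iter_congr (k : ℕ) {f g : ℂ → ℂ} {z : ℂ} (h : f =ᶠ[nhds z] g) :
    wirtingerBar^[k] f =ᶠ[nhds z] wirtingerBar^[k] g := by
  induction k generalizing f g with
  | zero => exact h
  | succ k ih =>
    rw [Function.iterate_succ_apply, Function.iterate_succ_apply]
    exact ih (wb_congr h)

lemma wb_contDiffOn {Ω : Set ℂ} (hΩ : IsOpen Ω) {n : ℕ} {f : ℂ → ℂ}
    (hf : ContDiffOn ℝ ((n + 1 : ℕ) : ℕ∞) f Ω) :
    ContDiffOn ℝ (n : ℕ∞) (wirtingerBar f) Ω := by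
  have hd : ContDiffOn ℝ (n : ℕ∞) (fun z => fderiv ℝ f z) Ω :=
    hf.fderiv_of_isOpen hΩ (by push_cast; rfl)
  unfold wirtingerBar
  exact contDiffOn_const.mul
    ((hd.clm_apply contDiffOn_const).add
      (contDiffOn_const.mul (hd.clm_apply contDiffOn_const)))

lemma wb_iter_contDiffOn {Ω : Set ℂ} (hΩ : IsOpen Ω) (k : ℕ) {n : ℕ} {f : ℂ → ℂ}
    (hf : ContDiffOn ℝ ((n + k : ℕ) : ℕ∞) f Ω) :
    ContDiffOn ℝ (n : ℕ∞) (wirtingerBar^[k] f) Ω := by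
  induction k generalizing f with
  | zero => simpa using hf
  | succ k ih =>
    rw [Function.iterate_succ_apply]
    exact ih (wb_contDiffOn hΩ hf)

theorem stmt_0 (Ω : Set ℂ) (hΩ : IsOpen Ω) (q : ℕ) (hq : 1 ≤ q) (f : ℂ → ℂ)
    (hf : ContDiffOn ℝ (q : ℕ∞) f Ω)
    (hana : ∀ z ∈ Ω \ f ⁻¹' {0}, (wirtingerBar^[q]) f z = 0) :
    ∀ z ∈ Ω, (wirtingerBar^[q]) f z = 0 := by
  intro z hz
  set s := Ω \ f ⁻¹' {0} with hs
  by_cases hcl : z ∈ closure s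
  · haveI hne : (nhdsWithin z s).NeBot := mem_closure_iff_nhdsWithin_neBot.mp hcl
    have hc : ContinuousOn (wirtingerBar^[q] f) Ω := by
      have hf' : ContDiffOn ℝ ((0 + q : ℕ) : ℕ∞) f Ω := by
        rw [Nat.zero_add]; exact hf
      have h0 : ContDiffOn ℝ ((0 : ℕ) : ℕ∞) (wirtingerBar^[q] f) Ω :=
        wb_iter_contDiffOn hΩ q hf'
      exact h0.continuousOn
    have h1 : Filter.Tendsto (wirtingerBar^[q] f) (nhdsWithin z s)
        (nhds (wirtingerBar^[q] f z)) :=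
      (hc z hz).mono_left (nhdsWithin_mono z Set.diff_subset)
    have h2 : Filter.Tendsto (wirtingerBar^[q] f) (nhdsWithin z s) (nhds 0) := by
      apply Filter.Tendsto.congr' _ tendsto_const_nhds
      filter_upwards [self_mem_nhdsWithin] with w hw
      exact (hana w hw).symm
    exact tendsto_nhds_unique h1 h2
  · have hev : f =ᶠ[nhds z] fun _ => 0 := by
      have hV : (closure s)ᶜ ∩ Ω ∈ nhds z :=
        Filter.inter_mem (isClosed_closure.isOpen_compl.mem_nhds hcl) (hΩ.mem_nhds hz)
      filter_upwards [hV] with w hw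
      show f w = 0
      by_contra hfw
      exact hw.1 (subset_closure ⟨hw.2, hfw⟩)
    calc wirtingerBar^[q] f z = wirtingerBar^[q] (fun _ => 0) z :=
          (wb_iter_congr q hev).self_of_nhds
      _ = 0 := by rw [wb_iter_zero]
end

section
/- Let Ω ⊂ ℂ be a convex open set, q ≥ 1, and f : Ω → ℂ smooth (C^∞) with (∂/∂z̄)^q f = 0 on Ω. Then there exist holomorphic functions a_0, …, a_{q−1} on Ω such that f(z) = Σ_{k=0}^{q−1} conj(z)^k a_k(z) for all z ∈ Ω. -/
open Complex

lemma wb_eq {f : ℂ → ℂ} {L : ℂ →L[ℝ] ℂ} {z : ℂ} (h : HasFDerivAt f L z) :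
    wirtingerBar f z = (1 / 2 : ℂ) * (L 1 + Complex.I * L Complex.I) := by
  rw [wirtingerBar, h.fderiv]

lemma wb_conj (z : ℂ) : wirtingerBar (fun w => (starRingEnd ℂ) w) z = 1 := by
  have h : HasFDerivAt (fun w : ℂ => (starRingEnd ℂ) w)
      (Complex.conjCLE : ℂ →L[ℝ] ℂ) z := Complex.conjCLE.hasFDerivAt
  rw [wb_eq h]
  simp [Complex.ext_iff]
  norm_num

lemma wb_of_holo {c : ℂ → ℂ} {z : ℂ} (hc : DifferentiableAt ℂ c z) :
    wirtingerBar c z = 0 := by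
  have h := hc.hasFDerivAt.restrictScalars ℝ
  rw [wb_eq h]
  simp only [ContinuousLinearMap.coe_restrictScalars']
  have h1 : (fderiv ℂ c z) Complex.I = Complex.I * (fderiv ℂ c z) 1 := by
    rw [show (Complex.I : ℂ) = Complex.I • (1 : ℂ) by simp, map_smul]
    simp [smul_eq_mul]
  rw [h1]
  ring_nf
  rw [Complex.I_sq]
  ring

lemma wb_mul {u v : ℂ → ℂ} {z : ℂ} (hu : DifferentiableAt ℝ u z)
    (hv : DifferentiableAt ℝ v z) :
    wirtingerBar (fun w => u w * v w) z
      = wirtingerBar u z * v z + u z * wirtingerBar v z := by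
  have h : HasFDerivAt (fun w => u w * v w) _ z := hu.hasFDerivAt.mul hv.hasFDerivAt
  rw [wb_eq h, wb_eq hu.hasFDerivAt, wb_eq hv.hasFDerivAt]
  simp only [ContinuousLinearMap.add_apply, ContinuousLinearMap.smul_apply, smul_eq_mul]
  ring

lemma wb_sub {u v : ℂ → ℂ} {z : ℂ} (hu : DifferentiableAt ℝ u z)
    (hv : DifferentiableAt ℝ v z) :
    wirtingerBar (fun w => u w - v w) z = wirtingerBar u z - wirtingerBar v z := by
  have h : HasFDerivAt (fun w => u w - v w) _ z := hu.hasFDerivAt.sub hv.hasFDerivAt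
  rw [wb_eq h, wb_eq hu.hasFDerivAt, wb_eq hv.hasFDerivAt]
  simp only [ContinuousLinearMap.sub_apply]
  ring

lemma wb_sum {ι : Type*} (s : Finset ι) (g : ι → ℂ → ℂ) (z : ℂ)
    (h : ∀ i ∈ s, DifferentiableAt ℝ (g i) z) :
    wirtingerBar (fun w => ∑ i ∈ s, g i w) z = ∑ i ∈ s, wirtingerBar (g i) z := by
  have h2 : HasFDerivAt (fun w => ∑ i ∈ s, g i w)
      (∑ i ∈ s, fderiv ℝ (g i) z) z :=
    HasFDerivAt.fun_sum (fun i hi => (h i hi).hasFDerivAt)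
  rw [wb_eq h2]
  simp only [ContinuousLinearMap.sum_apply, wirtingerBar]
  simp only [Finset.mul_sum, ← Finset.sum_add_distrib]

/-- Cauchy–Riemann: real-differentiable with vanishing Wirtinger bar derivative
implies complex differentiability. -/
lemma diffAt_of_wb {f : ℂ → ℂ} {z : ℂ} (hd : DifferentiableAt ℝ f z)
    (h : wirtingerBar f z = 0) : DifferentiableAt ℂ f z := by
  set L := fderiv ℝ f z with hL
  have h2 : L 1 + Complex.I * L Complex.I = 0 := by
    rw [wirtingerBar] at h
    field_simp at h
    rw [mul_zero] at h
    exact h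
  have hLI : L Complex.I = Complex.I * L 1 := by
    linear_combination (-Complex.I) * h2 + (L Complex.I) * Complex.I_mul_I
  have hlin : ∀ v : ℂ, L v = v * L 1 := by
    intro v
    have hv : v = v.re • (1 : ℂ) + v.im • Complex.I := by
      simp [Complex.real_smul]
    calc L v = L (v.re • (1 : ℂ) + v.im • Complex.I) := by rw [← hv]
    _ = v.re • L 1 + v.im • L Complex.I := by rw [map_add, map_smul, map_smul]
    _ = v * L 1 := by
        rw [hLI, Complex.real_smul, Complex.real_smul]
        linear_combination (L 1) * Complex.re_add_im v
  set L' : ℂ →L[ℂ] ℂ := ContinuousLinearMap.smulRight (1 : ℂ →L[ℂ] ℂ) (L 1) with hL'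
  have hres : L'.restrictScalars ℝ = L := by
    ext v
    simp [hL', smul_eq_mul]
    exact (hlin v).symm
  exact (hasFDerivAt_of_restrictScalars ℝ hd.hasFDerivAt hres).differentiableAt

lemma diffAt_term {c : ℂ → ℂ} {z : ℂ} (n : ℕ) (hc : DifferentiableAt ℂ c z) :
    DifferentiableAt ℝ (fun w => (starRingEnd ℂ) w ^ n * c w) z := by
  have hconj : DifferentiableAt ℝ (fun w : ℂ => (starRingEnd ℂ) w) z :=
    Complex.conjCLE.differentiableAt
  exact (hconj.pow n).mul (hc.restrictScalars ℝ)

lemma wb_term {c : ℂ → ℂ} {z : ℂ} (n : ℕ) (hc : DifferentiableAt ℂ c z) :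
    wirtingerBar (fun w => (starRingEnd ℂ) w ^ (n + 1) * c w) z
      = (n + 1 : ℂ) * (starRingEnd ℂ) z ^ n * c z := by
  induction n with
  | zero =>
    have h := wb_mul (z := z) (u := fun w => (starRingEnd ℂ) w) (v := c)
      Complex.conjCLE.differentiableAt (hc.restrictScalars ℝ)
    simp only [pow_one, pow_zero]
    rw [show (fun w => (starRingEnd ℂ) w ^ 1 * c w) = fun w => (starRingEnd ℂ) w * c w by
      simp]
    rw [h, wb_conj, wb_of_holo hc]
    ring
  | succ m ih =>
    have h := wb_mul (z := z) (u := fun w => (starRingEnd ℂ) w)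
      (v := fun w => (starRingEnd ℂ) w ^ (m + 1) * c w)
      Complex.conjCLE.differentiableAt (diffAt_term (m + 1) hc)
    rw [show (fun w => (starRingEnd ℂ) w ^ (m + 1 + 1) * c w)
        = fun w => (starRingEnd ℂ) w * ((starRingEnd ℂ) w ^ (m + 1) * c w) by
      funext w; ring]
    rw [h, wb_conj, ih]
    push_cast
    ring

/-- Main induction. -/
lemma key (Ω : Set ℂ) (hΩ : IsOpen Ω) :
    ∀ q : ℕ, ∀ f : ℂ → ℂ, ContDiffOn ℝ (⊤ : ℕ∞) f Ω →
    (∀ z ∈ Ω, (wirtingerBar^[q]) f z = 0) →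
    ∃ a : Fin q → ℂ → ℂ, (∀ k, DifferentiableOn ℂ (a k) Ω) ∧
      ∀ z ∈ Ω, f z = ∑ k : Fin q, (starRingEnd ℂ z) ^ (k : ℕ) * a k z := by
  intro q
  induction q with
  | zero =>
    intro f _ hana
    refine ⟨Fin.elim0, fun k => k.elim0, fun z hz => ?_⟩
    simpa using hana z hz
  | succ q IH =>
    intro f hf hana
    -- each point of Ω: f differentiable (ℝ) at z
    have hfd : ∀ z ∈ Ω, DifferentiableAt ℝ f z := fun z hz =>
      ((hf.differentiableOn (by simp)) z hz).differentiableAt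
        (hΩ.mem_nhds hz)
    -- g = wirtingerBar f is smooth on Ω
    have hfderiv : ContDiffOn ℝ (⊤ : ℕ∞) (fderiv ℝ f) Ω :=
      hf.fderiv_of_isOpen hΩ (by simp)
    have hg : ContDiffOn ℝ (⊤ : ℕ∞) (wirtingerBar f) Ω := by
      unfold wirtingerBar
      exact contDiffOn_const.mul
        ((hfderiv.clm_apply contDiffOn_const).add
          (contDiffOn_const.mul (hfderiv.clm_apply contDiffOn_const)))
    have hganaly : ∀ z ∈ Ω, (wirtingerBar^[q]) (wirtingerBar f) z = 0 := by
      intro z hz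
      have := hana z hz
      rwa [Function.iterate_succ_apply] at this
    obtain ⟨b, hb, hbf⟩ := IH (wirtingerBar f) hg hganaly
    -- antiderivative in z̄
    set F : ℂ → ℂ := fun w => ∑ k : Fin q,
      (starRingEnd ℂ) w ^ ((k : ℕ) + 1) * (((k : ℕ) + 1 : ℂ)⁻¹ * b k w) with hF
    have hbk : ∀ (k : Fin q), ∀ z ∈ Ω, DifferentiableAt ℂ
        (fun w => ((k : ℕ) + 1 : ℂ)⁻¹ * b k w) z := by
      intro k z hz
      exact (((hb k) z hz).differentiableAt (hΩ.mem_nhds hz)).const_mul _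
    have hFd : ∀ z ∈ Ω, DifferentiableAt ℝ F z := by
      intro z hz
      exact DifferentiableAt.fun_sum fun k _ => diffAt_term _ (hbk k z hz)
    have hwbF : ∀ z ∈ Ω, wirtingerBar F z = wirtingerBar f z := by
      intro z hz
      rw [hF]
      rw [wb_sum _ _ _ (fun k _ => diffAt_term _ (hbk k z hz))]
      have : ∀ k : Fin q, wirtingerBar
          (fun w => (starRingEnd ℂ) w ^ ((k : ℕ) + 1) * (((k : ℕ) + 1 : ℂ)⁻¹ * b k w)) z
          = (starRingEnd ℂ) z ^ (k : ℕ) * b k z := by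
        intro k
        rw [wb_term _ (hbk k z hz)]
        have hne : ((k : ℕ) + 1 : ℂ) ≠ 0 := by
          exact Nat.cast_add_one_ne_zero (k : ℕ)
        field_simp
      rw [Finset.sum_congr rfl (fun k _ => this k)]
      exact (hbf z hz).symm
    -- h = f - F is holomorphic
    have hh : DifferentiableOn ℂ (fun w => f w - F w) Ω := by
      intro z hz
      have hd : DifferentiableAt ℝ (fun w => f w - F w) z :=
        (hfd z hz).sub (hFd z hz)
      refine (diffAt_of_wb hd ?_).differentiableWithinAt
      rw [wb_sub (hfd z hz) (hFd z hz), hwbF z hz, sub_self]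
    refine ⟨Fin.cases (fun w => f w - F w)
      (fun k => fun w => ((k : ℕ) + 1 : ℂ)⁻¹ * b k w), ?_, ?_⟩
    · intro k
      induction k using Fin.cases with
      | zero => simpa using hh
      | succ k =>
        simp only [Fin.cases_succ]
        exact fun z hz => ((hb k z hz).const_mul _)
    · intro z hz
      rw [Fin.sum_univ_succ]
      simp only [Fin.cases_zero, Fin.cases_succ, Fin.val_zero, pow_zero, one_mul,
        Fin.val_succ]
      rw [hF]
      ring

theorem stmt_11 (Ω : Set ℂ) (hΩ : IsOpen Ω) (hconv : Convex ℝ Ω)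
    (q : ℕ) (hq : 1 ≤ q) (f : ℂ → ℂ) (hf : ContDiffOn ℝ (⊤ : ℕ∞) f Ω)
    (hana : ∀ z ∈ Ω, (wirtingerBar^[q]) f z = 0) :
    ∃ a : Fin q → ℂ → ℂ, (∀ k, DifferentiableOn ℂ (a k) Ω) ∧
      ∀ z ∈ Ω, f z = ∑ k : Fin q, (starRingEnd ℂ z) ^ (k : ℕ) * a k z :=
  key Ω hΩ q f hf hana
end
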